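/- If φ : (0,∞) → ℝ is completely monotone and ψ : (0,∞) → (0,∞) is a Bernstein function (nonnegative, C^∞, with completely monotone first derivative), then the composition φ ∘ ψ is completely monotone. -/

import Mathlib

/-- A function is completely monotone on (0,∞) if it is C^∞ there and
(-1)^n φ^{(n)}(t) ≥ 0 for all n and all t > 0. -/
def CompletelyMonotoneOn (φ : ℝ → ℝ) : Prop :=
  ContDiffOn ℝ (⊤ : ℕ∞) φ (Set.Ioi 0) ∧
    ∀ n : ℕ, ∀ t ∈ Set.Ioi (0 : ℝ),
      0 ≤ (-1 : ℝ) ^ n * iteratedDerivWithin n φ (Set.Ioi 0) t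

/-- A Bernstein function on (0,∞): nonnegative, C^∞, with completely monotone
first derivative. -/
def BernsteinOn (ψ : ℝ → ℝ) : Prop :=
  (∀ t ∈ Set.Ioi (0 : ℝ), 0 ≤ ψ t) ∧ ContDiffOn ℝ (⊤ : ℕ∞) ψ (Set.Ioi 0) ∧
    CompletelyMonotoneOn (fun t => derivWithin ψ (Set.Ioi 0) t)

open Set Topology

namespace CMBernAux

/-- Deriv-based complete monotonicity. -/
def CM (f : ℝ → ℝ) : Prop :=
  ContDiffOn ℝ (⊤ : ℕ∞) f (Set.Ioi 0) ∧
    ∀ n : ℕ, ∀ t ∈ Set.Ioi (0 : ℝ), 0 ≤ (-1 : ℝ) ^ n * iteratedDeriv n f t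

lemma iter_open (n : ℕ) (f : ℝ → ℝ) {t : ℝ} (ht : t ∈ Set.Ioi (0 : ℝ)) :
    iteratedDerivWithin n f (Set.Ioi 0) t = iteratedDeriv n f t := by
  simp only [iteratedDerivWithin, iteratedDeriv,
    iteratedFDerivWithin_of_isOpen (f := f) (𝕜 := ℝ) n isOpen_Ioi ht]

lemma cm_iff (f : ℝ → ℝ) : CompletelyMonotoneOn f ↔ CM f := by
  constructor
  · rintro ⟨h1, h2⟩
    exact ⟨h1, fun n t ht => by rw [← iter_open n f ht]; exact h2 n t ht⟩
  · rintro ⟨h1, h2⟩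
    exact ⟨h1, fun n t ht => by rw [iter_open n f ht]; exact h2 n t ht⟩

lemma diffAt {f : ℝ → ℝ} (hf : ContDiffOn ℝ (⊤ : ℕ∞) f (Set.Ioi 0)) {x : ℝ}
    (hx : x ∈ Set.Ioi (0 : ℝ)) : DifferentiableAt ℝ f x :=
  (hf.contDiffAt (isOpen_Ioi.mem_nhds hx)).differentiableAt (by simp)

lemma CM.negDeriv {f : ℝ → ℝ} (hf : CM f) : CM (fun x => -deriv f x) := by
  refine ⟨(hf.1.deriv_of_isOpen isOpen_Ioi (by simp)).neg, fun n t ht => ?_⟩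
  have h1 : iteratedDeriv n (fun x => -deriv f x) t = -iteratedDeriv n (deriv f) t :=
    iteratedDeriv_neg n (deriv f) t
  have h2 : iteratedDeriv (n + 1) f t = iteratedDeriv n (deriv f) t := by
    rw [iteratedDeriv_succ']
  have h3 := hf.2 (n + 1) t ht
  rw [h2] at h3
  rw [h1]
  have : (-1 : ℝ) ^ n * -iteratedDeriv n (deriv f) t
      = (-1 : ℝ) ^ (n + 1) * iteratedDeriv n (deriv f) t := by
    rw [pow_succ]; ring
  rw [this]; exact h3

lemma iD_congr_nhds {f g : ℝ → ℝ} {t : ℝ} (ht : t ∈ Set.Ioi (0 : ℝ))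
    (h : ∀ x ∈ Set.Ioi (0 : ℝ), f x = g x) (n : ℕ) :
    iteratedDeriv n f t = iteratedDeriv n g t :=
  Filter.EventuallyEq.iteratedDeriv_eq n
    (by filter_upwards [isOpen_Ioi.mem_nhds ht] using h)

lemma iD_add {f g : ℝ → ℝ} (hf : ContDiffOn ℝ (⊤ : ℕ∞) f (Set.Ioi 0))
    (hg : ContDiffOn ℝ (⊤ : ℕ∞) g (Set.Ioi 0)) {t : ℝ} (ht : t ∈ Set.Ioi (0 : ℝ)) (n : ℕ) :
    iteratedDeriv n (fun x => f x + g x) t = iteratedDeriv n f t + iteratedDeriv n g t := by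
  rw [← iter_open n f ht, ← iter_open n g ht, ← iter_open n (fun x => f x + g x) ht]
  exact iteratedDerivWithin_add (hx := ht) (h := isOpen_Ioi.uniqueDiffOn) ((hf.contDiffWithinAt ht).of_le (by exact_mod_cast le_top)) ((hg.contDiffWithinAt ht).of_le (by exact_mod_cast le_top))

/-- Product of completely monotone functions: the sign part. -/
lemma mul_sign : ∀ n : ℕ, ∀ f g : ℝ → ℝ, CM f → CM g → ∀ t ∈ Set.Ioi (0 : ℝ),
    0 ≤ (-1 : ℝ) ^ n * iteratedDeriv n (fun x => f x * g x) t := by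
  intro n
  induction n with
  | zero =>
    intro f g hf hg t ht
    simpa using mul_nonneg (by simpa using hf.2 0 t ht) (by simpa using hg.2 0 t ht)
  | succ n IH =>
    intro f g hf hg t ht
    have hf' := hf.negDeriv
    have hg' := hg.negDeriv
    have hA : ContDiffOn ℝ (⊤ : ℕ∞) (fun x => -deriv f x * g x) (Set.Ioi 0) := hf'.1.mul hg.1
    have hB : ContDiffOn ℝ (⊤ : ℕ∞) (fun x => f x * -deriv g x) (Set.Ioi 0) := hf.1.mul hg'.1
    have key : ∀ x ∈ Set.Ioi (0 : ℝ),
        deriv (fun y => f y * g y) x = -(-deriv f x * g x + f x * -deriv g x) := by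
      intro x hx
      rw [deriv_fun_mul (diffAt hf.1 hx) (diffAt hg.1 hx)]
      ring
    have e1 : iteratedDeriv (n + 1) (fun x => f x * g x) t
        = iteratedDeriv n (deriv (fun y => f y * g y)) t := by rw [iteratedDeriv_succ']
    have e2 : iteratedDeriv n (deriv (fun y => f y * g y)) t
        = iteratedDeriv n (fun x => -(-deriv f x * g x + f x * -deriv g x)) t :=
      iD_congr_nhds ht key n
    have e3 : iteratedDeriv n (fun x => -(-deriv f x * g x + f x * -deriv g x)) t
        = -(iteratedDeriv n (fun x => -deriv f x * g x) t
            + iteratedDeriv n (fun x => f x * -deriv g x) t) := by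
      rw [iteratedDeriv_fun_neg n (fun x => -deriv f x * g x + f x * -deriv g x) t,
        iD_add hA hB ht n]
    have ha := IH (fun x => -deriv f x) g hf' hg t ht
    have hb := IH f (fun x => -deriv g x) hf hg' t ht
    rw [e1, e2, e3, pow_succ]
    set a := iteratedDeriv n (fun x => -deriv f x * g x) t
    set b := iteratedDeriv n (fun x => f x * -deriv g x) t
    nlinarith [ha, hb]

lemma CM.mul {f g : ℝ → ℝ} (hf : CM f) (hg : CM g) : CM (fun x => f x * g x) :=
  ⟨hf.1.mul hg.1, fun n t ht => mul_sign n f g hf hg t ht⟩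

lemma CM.one : CM (fun _ : ℝ => (1 : ℝ)) := by
  refine ⟨contDiffOn_const, fun n t ht => ?_⟩
  cases n with
  | zero => simp
  | succ n =>
    have : iteratedDeriv (n + 1) (fun _ : ℝ => (1 : ℝ)) t = 0 := by
      rw [iteratedDeriv_succ']
      have : deriv (fun _ : ℝ => (1 : ℝ)) = fun _ : ℝ => (0 : ℝ) := by
        funext x; exact deriv_const x 1
      rw [this]
      induction n generalizing t with
      | zero => simp
      | succ m IH =>
        rw [iteratedDeriv_succ']
        have : deriv (fun _ : ℝ => (0 : ℝ)) = fun _ : ℝ => (0 : ℝ) := by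
          funext x; exact deriv_const x 0
        rw [this]
        exact IH t ht
    rw [this]; simp

section comp

variable {ψ : ℝ → ℝ} (hψs : ContDiffOn ℝ (⊤ : ℕ∞) ψ (Set.Ioi 0))
  (hψ' : CM (deriv ψ)) (hmaps : Set.MapsTo ψ (Set.Ioi 0) (Set.Ioi 0))

include hψs hψ' hmaps in
lemma comp_sign : ∀ n : ℕ, ∀ φ g : ℝ → ℝ, CM φ → CM g → ∀ t ∈ Set.Ioi (0 : ℝ),
    0 ≤ (-1 : ℝ) ^ n * iteratedDeriv n (fun x => φ (ψ x) * g x) t := by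
  intro n
  induction n with
  | zero =>
    intro φ g hφ hg t ht
    simpa using mul_nonneg (by simpa using hφ.2 0 (ψ t) (hmaps ht))
      (by simpa using hg.2 0 t ht)
  | succ n IH =>
    intro φ g hφ hg t ht
    have hφ' := hφ.negDeriv
    have hg' := hg.negDeriv
    have hψg : CM (fun x => deriv ψ x * g x) := hψ'.mul hg
    have hφψ : ContDiffOn ℝ (⊤ : ℕ∞) (fun x => φ (ψ x)) (Set.Ioi 0) := hφ.1.comp hψs hmaps
    have hA : ContDiffOn ℝ (⊤ : ℕ∞) (fun x => -deriv φ (ψ x) * (deriv ψ x * g x)) (Set.Ioi 0) :=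
      (hφ'.1.comp hψs hmaps).mul hψg.1
    have hB : ContDiffOn ℝ (⊤ : ℕ∞) (fun x => φ (ψ x) * -deriv g x) (Set.Ioi 0) :=
      hφψ.mul hg'.1
    have key : ∀ x ∈ Set.Ioi (0 : ℝ),
        deriv (fun y => φ (ψ y) * g y) x
          = -(-deriv φ (ψ x) * (deriv ψ x * g x) + φ (ψ x) * -deriv g x) := by
      intro x hx
      have dψ : DifferentiableAt ℝ ψ x := diffAt hψs hx
      have dφ : DifferentiableAt ℝ φ (ψ x) := diffAt hφ.1 (hmaps hx)
      have dcomp : DifferentiableAt ℝ (fun y => φ (ψ y)) x := dφ.comp x dψ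
      have hc : deriv (fun y => φ (ψ y)) x = deriv φ (ψ x) * deriv ψ x :=
        deriv_comp x dφ dψ
      rw [deriv_fun_mul dcomp (diffAt hg.1 hx), hc]
      ring
    have e1 : iteratedDeriv (n + 1) (fun x => φ (ψ x) * g x) t
        = iteratedDeriv n (deriv (fun y => φ (ψ y) * g y)) t := by rw [iteratedDeriv_succ']
    have e2 : iteratedDeriv n (deriv (fun y => φ (ψ y) * g y)) t
        = iteratedDeriv n
            (fun x => -(-deriv φ (ψ x) * (deriv ψ x * g x) + φ (ψ x) * -deriv g x)) t :=
      iD_congr_nhds ht key n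
    have e3 : iteratedDeriv n
          (fun x => -(-deriv φ (ψ x) * (deriv ψ x * g x) + φ (ψ x) * -deriv g x)) t
        = -(iteratedDeriv n (fun x => -deriv φ (ψ x) * (deriv ψ x * g x)) t
            + iteratedDeriv n (fun x => φ (ψ x) * -deriv g x) t) := by
      rw [iteratedDeriv_fun_neg n
        (fun x => -deriv φ (ψ x) * (deriv ψ x * g x) + φ (ψ x) * -deriv g x) t,
        iD_add hA hB ht n]
    have ha := IH (fun y => -deriv φ y) (fun x => deriv ψ x * g x) hφ' hψg t ht
    have hb := IH φ (fun x => -deriv g x) hφ hg' t ht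
    rw [e1, e2, e3, pow_succ]
    set a := iteratedDeriv n (fun x => -deriv φ (ψ x) * (deriv ψ x * g x)) t
    set b := iteratedDeriv n (fun x => φ (ψ x) * -deriv g x) t
    nlinarith [ha, hb]

end comp

end CMBernAux

/-- If φ is completely monotone on (0,∞) and ψ is a Bernstein
function mapping (0,∞) into (0,∞), then φ ∘ ψ is completely monotone. -/
theorem completelyMonotone_comp_bernstein (φ ψ : ℝ → ℝ)
    (hφ : CompletelyMonotoneOn φ) (hψ : BernsteinOn ψ)
    (hmaps : Set.MapsTo ψ (Set.Ioi 0) (Set.Ioi 0)) :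
    CompletelyMonotoneOn (φ ∘ ψ) := by
  open CMBernAux in
  have hφCM : CM φ := (cm_iff φ).1 hφ
  have hψs : ContDiffOn ℝ (⊤ : ℕ∞) ψ (Set.Ioi 0) := hψ.2.1
  -- complete monotonicity of deriv ψ
  have hψ' : CMBernAux.CM (deriv ψ) := by
    obtain ⟨hc, hs⟩ := hψ.2.2
    refine ⟨hc.congr fun x hx => (derivWithin_of_isOpen isOpen_Ioi hx).symm, fun n t ht => ?_⟩
    have heq : Set.EqOn (deriv ψ) (fun t => derivWithin ψ (Set.Ioi 0) t) (Set.Ioi 0) :=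
      fun x hx => (derivWithin_of_isOpen isOpen_Ioi hx).symm
    have := hs n t ht
    rwa [← iteratedDerivWithin_congr (n := n) heq ht,
      CMBernAux.iter_open n (deriv ψ) ht] at this
  constructor
  · exact hφ.1.comp hψs hmaps
  · intro n t ht
    rw [CMBernAux.iter_open n (φ ∘ ψ) ht]
    have : iteratedDeriv n (φ ∘ ψ) t = iteratedDeriv n (fun x => φ (ψ x) * 1) t := by
      congr 1; funext x; simp [Function.comp]
    rw [this]
    exact CMBernAux.comp_sign hψs hψ' hmaps n φ (fun _ => 1) hφCM CMBernAux.CM.one t ht
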